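/- arXiv:1512.05735 — 2 statements merged into one kernel-verified Lean document; each statement's English description precedes it below -/
import Mathlib

section
/- The first Weyl algebra A₁ over a field of characteristic zero is a simple ring: its only two-sided ideals are 0 and A₁. -/
/-- The defining relation of the Weyl algebra: `∂ * x = x * ∂ + 1`, where `x` is the
image of `0 : Fin 2` and `∂` is the image of `1 : Fin 2` in the free algebra. -/
def WeylRel (k : Type) [CommRing k] :
    FreeAlgebra k (Fin 2) → FreeAlgebra k (Fin 2) → Prop := fun a b =>
  a = FreeAlgebra.ι k (1 : Fin 2) * FreeAlgebra.ι k (0 : Fin 2) ∧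
  b = FreeAlgebra.ι k (0 : Fin 2) * FreeAlgebra.ι k (1 : Fin 2) + 1

/-- The first Weyl algebra over `k`, generated by `x` and `∂` with `∂x - x∂ = 1`. -/
def WeylAlgebra (k : Type) [CommRing k] : Type := RingQuot (WeylRel k)

noncomputable instance (k : Type) [CommRing k] : Ring (WeylAlgebra k) :=
  inferInstanceAs (Ring (RingQuot (WeylRel k)))

noncomputable instance (k : Type) [CommRing k] : Algebra k (WeylAlgebra k) :=
  inferInstanceAs (Algebra k (RingQuot (WeylRel k)))

set_option linter.unusedSectionVars false

namespace WeylSimple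

open MvPolynomial

variable (k : Type) [Field k] [CharZero k]

noncomputable def mk : FreeAlgebra k (Fin 2) →ₐ[k] WeylAlgebra k := RingQuot.mkAlgHom k (WeylRel k)

noncomputable def wx : WeylAlgebra k := mk k (FreeAlgebra.ι k 0)
noncomputable def wd : WeylAlgebra k := mk k (FreeAlgebra.ι k 1)

lemma wrel : wd k * wx k = wx k * wd k + 1 := by
  have h := RingQuot.mkAlgHom_rel k (s := WeylRel k)
    (x := FreeAlgebra.ι k (1 : Fin 2) * FreeAlgebra.ι k (0 : Fin 2))
    (y := FreeAlgebra.ι k (0 : Fin 2) * FreeAlgebra.ι k (1 : Fin 2) + 1) ⟨rfl, rfl⟩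
  show mk k _ * mk k _ = mk k _ * mk k _ + 1
  rw [← map_mul, ← map_mul, ← map_one (mk k), ← map_add]
  exact h

abbrev P := MvPolynomial (Fin 2) k

noncomputable def mX : Module.End k (P k) := LinearMap.mulLeft k (X 0)
noncomputable def mD : Module.End k (P k) :=
  LinearMap.mulLeft k (X 1) + (pderiv (0 : Fin 2)).toLinearMap

lemma endRel : mD k * mX k = mX k * mD k + 1 := by
  refine LinearMap.ext fun p => ?_
  show X 1 * (X 0 * p) + pderiv (0 : Fin 2) (X 0 * p)
      = X 0 * (X 1 * p + pderiv (0 : Fin 2) p) + p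
  rw [pderiv_mul, pderiv_X_self]
  ring

noncomputable def ρ : WeylAlgebra k →ₐ[k] Module.End k (P k) :=
  RingQuot.liftAlgHom k ⟨FreeAlgebra.lift k ![mX k, mD k], by
    rintro a b ⟨rfl, rfl⟩
    simp only [map_mul, map_add, map_one, FreeAlgebra.lift_ι_apply]
    show mD k * mX k = mX k * mD k + 1
    exact endRel k⟩

lemma ρ_wx : ρ k (wx k) = mX k := by
  show (RingQuot.liftAlgHom k ⟨_, _⟩) (RingQuot.mkAlgHom k (WeylRel k) (FreeAlgebra.ι k 0)) = _
  rw [RingQuot.liftAlgHom_mkAlgHom_apply, FreeAlgebra.lift_ι_apply]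
  rfl

lemma ρ_wd : ρ k (wd k) = mD k := by
  show (RingQuot.liftAlgHom k ⟨_, _⟩) (RingQuot.mkAlgHom k (WeylRel k) (FreeAlgebra.ι k 1)) = _
  rw [RingQuot.liftAlgHom_mkAlgHom_apply, FreeAlgebra.lift_ι_apply]
  rfl

noncomputable def ε : WeylAlgebra k →ₗ[k] P k :=
  (LinearMap.applyₗ (1 : P k)).comp (ρ k).toLinearMap

lemma ε_apply (a : WeylAlgebra k) : ε k a = ρ k a 1 := rfl

lemma ε_one : ε k 1 = 1 := by
  rw [ε_apply, map_one (ρ k), Module.End.one_apply]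

lemma ε_x_mul (a : WeylAlgebra k) : ε k (wx k * a) = X 0 * ε k a := by
  rw [ε_apply, map_mul, ρ_wx, Module.End.mul_apply]
  rfl

lemma ε_d_mul (a : WeylAlgebra k) :
    ε k (wd k * a) = X 1 * ε k a + pderiv (0 : Fin 2) (ε k a) := by
  rw [ε_apply, map_mul, ρ_wd, Module.End.mul_apply]
  rfl

/-- Generation principle: a submodule containing 1 and closed under left
multiplication by `x` and `∂` is everything. -/
lemma gen (S : Submodule k (WeylAlgebra k)) (h1 : (1 : WeylAlgebra k) ∈ S)
    (hx : ∀ s ∈ S, wx k * s ∈ S) (hd : ∀ s ∈ S, wd k * s ∈ S) (w : WeylAlgebra k) : w ∈ S := by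
  obtain ⟨f, rfl⟩ := RingQuot.mkAlgHom_surjective k (WeylRel k) w
  have key : ∀ f : FreeAlgebra k (Fin 2), ∀ s ∈ S, mk k f * s ∈ S := by
    intro f
    induction f using FreeAlgebra.induction with
    | grade0 r =>
      intro s hs
      rw [AlgHom.commutes, ← Algebra.smul_def]
      exact S.smul_mem r hs
    | grade1 i =>
      fin_cases i
      · exact fun s hs => hx s hs
      · exact fun s hs => hd s hs
    | mul a b ha hb =>
      intro s hs
      rw [map_mul, mul_assoc]
      exact ha _ (hb s hs)
    | add a b ha hb =>
      intro s hs
      rw [map_add, add_mul]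
      exact S.add_mem (ha s hs) (hb s hs)
  have := key f 1 h1
  rw [mul_one] at this
  exact this


lemma mD_pow_one (i : ℕ) : ((mD k) ^ i) 1 = X 1 ^ i := by
  induction i with
  | zero => simp
  | succ n ih =>
    rw [pow_succ', Module.End.mul_apply, ih]
    simp only [mD, LinearMap.add_apply, LinearMap.mulLeft_apply, Derivation.coeFn_coe]
    rw [pderiv_pow, pderiv_X_of_ne (show (1 : Fin 2) ≠ 0 by decide)]
    ring

lemma ε_word (j i : ℕ) : ε k (wx k ^ j * wd k ^ i) = X 0 ^ j * X 1 ^ i := by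
  rw [ε_apply, map_mul, map_pow, map_pow, ρ_wx, ρ_wd, Module.End.mul_apply, mD_pow_one,
    mX, LinearMap.pow_mulLeft, LinearMap.mulLeft_apply]

lemma monomial_eq' (m : Fin 2 →₀ ℕ) :
    (monomial m 1 : P k) = X 0 ^ m 0 * X 1 ^ m 1 := by
  rw [monomial_eq, C_1, one_mul, Finsupp.prod_fintype]
  · exact Fin.prod_univ_two _
  · intro i; exact pow_zero _

noncomputable def σm : P k →ₗ[k] WeylAlgebra k :=
  (MvPolynomial.basisMonomials (Fin 2) k).constr k fun m => wx k ^ m 0 * wd k ^ m 1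

lemma σm_monomial (m : Fin 2 →₀ ℕ) :
    σm k (monomial m 1) = wx k ^ m 0 * wd k ^ m 1 := by
  have h := Module.Basis.constr_basis (MvPolynomial.basisMonomials (Fin 2) k) k
    (fun m => wx k ^ m 0 * wd k ^ m 1) m
  rw [coe_basisMonomials] at h
  exact h

lemma ε_σm (p : P k) : ε k (σm k p) = p := by
  have h : (ε k).comp (σm k) = LinearMap.id := by
    apply Module.Basis.ext (MvPolynomial.basisMonomials (Fin 2) k)
    intro m
    rw [coe_basisMonomials, LinearMap.comp_apply, σm_monomial, ε_word, LinearMap.id_apply]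
    exact (monomial_eq' k m).symm
  exact DFunLike.congr_fun h p

lemma d_mul_x_pow (j : ℕ) :
    wd k * wx k ^ j = wx k ^ j * wd k + j • wx k ^ (j - 1) := by
  induction j with
  | zero => simp
  | succ n ih =>
    rw [pow_succ', ← mul_assoc, wrel, add_mul, one_mul, mul_assoc, ih, mul_add, ← mul_assoc,
      ← pow_succ']
    cases n with
    | zero => simp
    | succ m =>
      rw [mul_smul_comm, ← pow_succ']
      simp only [Nat.succ_sub_one, succ_nsmul]
      abel

lemma x_mul_σm (p : P k) : wx k * σm k p = σm k (X 0 * p) := by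
  have h : (LinearMap.mulLeft k (wx k)).comp (σm k)
      = (σm k).comp (LinearMap.mulLeft k (X 0)) := by
    apply Module.Basis.ext (MvPolynomial.basisMonomials (Fin 2) k)
    intro m
    rw [coe_basisMonomials, LinearMap.comp_apply, LinearMap.comp_apply,
      LinearMap.mulLeft_apply, LinearMap.mulLeft_apply, σm_monomial]
    have hX : (X 0 : P k) * monomial m 1 = monomial (Finsupp.single 0 1 + m) 1 := by
      rw [X, monomial_mul, one_mul]
    rw [hX, σm_monomial]
    simp only [Finsupp.add_apply, Finsupp.single_eq_same,
      Finsupp.single_eq_of_ne (show (1 : Fin 2) ≠ 0 by decide), zero_add]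
    rw [← mul_assoc, ← pow_succ', add_comm 1 (m 0)]
  exact DFunLike.congr_fun h p

lemma d_mul_σm (p : P k) :
    wd k * σm k p = σm k (X 1 * p + pderiv (0 : Fin 2) p) := by
  have h : (LinearMap.mulLeft k (wd k)).comp (σm k)
      = (σm k).comp (LinearMap.mulLeft k (X 1) + (pderiv (0 : Fin 2)).toLinearMap) := by
    apply Module.Basis.ext (MvPolynomial.basisMonomials (Fin 2) k)
    intro m
    have hX : (X 1 : P k) * monomial m 1 = monomial (Finsupp.single 1 1 + m) 1 := by
      rw [X, monomial_mul, one_mul]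
    have hpd : pderiv (0 : Fin 2) (monomial m 1 : P k)
        = (m 0 : k) • monomial (m - Finsupp.single 0 1) 1 := by
      rw [pderiv_monomial, one_mul, smul_monomial, smul_eq_mul, mul_one]
    have ht : (LinearMap.mulLeft k (X 1) + (pderiv (0 : Fin 2)).toLinearMap
          : P k →ₗ[k] P k) (monomial m 1 : P k)
        = X 1 * monomial m 1 + pderiv (0 : Fin 2) (monomial m 1 : P k) := rfl
    rw [coe_basisMonomials, LinearMap.comp_apply, LinearMap.comp_apply,
      LinearMap.mulLeft_apply, σm_monomial, ht, map_add, hX, hpd, map_smul,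
      σm_monomial, σm_monomial]
    simp only [Finsupp.add_apply, Finsupp.tsub_apply,
      Finsupp.single_eq_same, Finsupp.single_eq_of_ne (show (1 : Fin 2) ≠ 0 by decide),
      Finsupp.single_eq_of_ne (show (0 : Fin 2) ≠ 1 by decide), Nat.sub_zero, Nat.zero_add,
      Nat.add_zero, zero_add]
    rw [← mul_assoc, d_mul_x_pow, add_mul, mul_assoc, ← pow_succ', smul_mul_assoc,
      Nat.cast_smul_eq_nsmul, add_comm (m 1) 1]
  exact DFunLike.congr_fun h p

lemma σm_surjective : Function.Surjective (σm k) := by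
  intro w
  have hw : w ∈ LinearMap.range (σm k) := by
    apply gen k (LinearMap.range (σm k))
    · exact ⟨monomial 0 1, by rw [σm_monomial]; simp⟩
    · rintro s ⟨p, rfl⟩
      exact ⟨X 0 * p, (x_mul_σm k p).symm⟩
    · rintro s ⟨p, rfl⟩
      exact ⟨X 1 * p + pderiv (0 : Fin 2) p, (d_mul_σm k p).symm⟩
  exact hw

lemma ε_injective : Function.Injective (ε k) := by
  intro a b hab
  obtain ⟨p, rfl⟩ := σm_surjective k a
  obtain ⟨q, rfl⟩ := σm_surjective k b
  rw [ε_σm, ε_σm] at hab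
  rw [hab]


lemma coeff_pderiv (i : Fin 2) (p : P k) (m : Fin 2 →₀ ℕ) :
    coeff m (pderiv i p) = ((m i + 1 : ℕ) : k) * coeff (m + Finsupp.single i 1) p := by
  induction p using MvPolynomial.induction_on' with
  | monomial u a =>
    classical
    rw [pderiv_monomial, coeff_monomial, coeff_monomial]
    by_cases h2 : u = m + Finsupp.single i 1
    · subst h2
      rw [if_pos (add_tsub_cancel_right m (Finsupp.single i 1)), if_pos rfl]
      simp only [Finsupp.add_apply, Finsupp.single_eq_same]
      ring
    · rw [if_neg h2, mul_zero]
      by_cases h1 : u - Finsupp.single i 1 = m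
      · rw [if_pos h1]
        rcases Nat.eq_zero_or_pos (u i) with hu | hu
        · simp [hu]
        · exfalso
          apply h2
          have hle : Finsupp.single i 1 ≤ u := Finsupp.single_le_iff.mpr hu
          rw [← h1, tsub_add_cancel_of_le hle]
      · rw [if_neg h1]
  | add p q hp hq =>
    rw [map_add, coeff_add, coeff_add, hp, hq]
    ring

lemma pd_comm (i j : Fin 2) (p : P k) :
    pderiv i (pderiv j p) = pderiv j (pderiv i p) := by
  apply MvPolynomial.ext
  intro m
  rw [coeff_pderiv, coeff_pderiv, coeff_pderiv, coeff_pderiv,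
    add_right_comm m (Finsupp.single i 1) (Finsupp.single j 1)]
  by_cases hij : i = j
  · subst hij; ring
  · rw [Finsupp.add_apply, Finsupp.add_apply, Finsupp.single_eq_of_ne hij,
      Finsupp.single_eq_of_ne (fun h => hij h.symm), add_zero, add_zero]
    ring

lemma ε_mul_x (a : WeylAlgebra k) :
    ε k (a * wx k) = X 0 * ε k a + pderiv (1 : Fin 2) (ε k a) := by
  have key : ∀ b : WeylAlgebra k, b ∈ LinearMap.eqLocus
      ((ε k).comp (LinearMap.mulRight k (wx k)))
      ((LinearMap.mulLeft k (X 0) + (pderiv (1 : Fin 2)).toLinearMap).comp (ε k)) := by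
    intro b
    apply gen k
    · show ε k (1 * wx k) = X 0 * ε k 1 + pderiv (1 : Fin 2) (ε k 1)
      rw [one_mul, ε_one, ε_apply, ρ_wx]
      simp [mX, pderiv_one]
    · intro s hs
      have hs' : ε k (s * wx k) = X 0 * ε k s + pderiv (1 : Fin 2) (ε k s) := hs
      show ε k (wx k * s * wx k) = X 0 * ε k (wx k * s) + pderiv (1 : Fin 2) (ε k (wx k * s))
      rw [mul_assoc, ε_x_mul, ε_x_mul, hs']
      simp only [mul_add, pderiv_mul, pderiv_X_of_ne (show (0 : Fin 2) ≠ 1 by decide),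
        zero_mul, zero_add]
    · intro s hs
      have hs' : ε k (s * wx k) = X 0 * ε k s + pderiv (1 : Fin 2) (ε k s) := hs
      show ε k (wd k * s * wx k) = X 0 * ε k (wd k * s) + pderiv (1 : Fin 2) (ε k (wd k * s))
      rw [mul_assoc, ε_d_mul, ε_d_mul, hs']
      simp only [map_add, pderiv_mul, pderiv_X_self, pderiv_X_of_ne, one_mul, zero_mul,
        mul_zero, add_zero, zero_add, pd_comm k (0 : Fin 2) (1 : Fin 2)]
      ring
  exact key a

lemma ε_mul_d (a : WeylAlgebra k) : ε k (a * wd k) = X 1 * ε k a := by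
  have key : ∀ b : WeylAlgebra k, b ∈ LinearMap.eqLocus
      ((ε k).comp (LinearMap.mulRight k (wd k)))
      ((LinearMap.mulLeft k (X 1)).comp (ε k)) := by
    intro b
    apply gen k
    · show ε k (1 * wd k) = X 1 * ε k 1
      rw [one_mul, ε_one, ε_apply, ρ_wd]
      simp [mD, pderiv_one]
    · intro s hs
      have hs' : ε k (s * wd k) = X 1 * ε k s := hs
      show ε k (wx k * s * wd k) = X 1 * ε k (wx k * s)
      rw [mul_assoc, ε_x_mul, ε_x_mul, hs']
      ring
    · intro s hs
      have hs' : ε k (s * wd k) = X 1 * ε k s := hs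
      show ε k (wd k * s * wd k) = X 1 * ε k (wd k * s)
      rw [mul_assoc, ε_d_mul, ε_d_mul, hs']
      simp only [map_add, pderiv_mul, pderiv_X_of_ne (show (1 : Fin 2) ≠ 0 by decide),
        zero_mul, zero_add]
      ring
  exact key a

lemma ε_comm_x (a : WeylAlgebra k) :
    ε k (a * wx k - wx k * a) = pderiv (1 : Fin 2) (ε k a) := by
  rw [map_sub, ε_mul_x, ε_x_mul]
  ring

lemma ε_comm_d (a : WeylAlgebra k) :
    ε k (wd k * a - a * wd k) = pderiv (0 : Fin 2) (ε k a) := by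
  rw [map_sub, ε_mul_d, ε_d_mul]
  ring

lemma eq_C_of_td_zero (p : P k) (h : p.totalDegree = 0) : p = C (coeff 0 p) := by
  have h' := (totalDegree_eq_zero_iff (Fin 2) p).mp h
  apply MvPolynomial.ext
  intro m
  rw [coeff_C]
  split_ifs with hm
  · rw [← hm]
  · by_contra hc
    exact hm (Finsupp.ext fun j => h' m (mem_support_iff.mpr hc) j).symm

lemma const_case (p : P k) (hp : p ≠ 0) (h : p.totalDegree = 0) :
    ∃ (c : k) (l : List (Fin 2)), c ≠ 0 ∧
      List.foldr (fun i q => pderiv i q) p l = C c :=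
  ⟨coeff 0 p, [], fun h0 => hp (by rw [eq_C_of_td_zero k p h, h0, map_zero]),
    eq_C_of_td_zero k p h⟩

lemma exists_list (p : P k) (hp : p ≠ 0) :
    ∃ (c : k) (l : List (Fin 2)), c ≠ 0 ∧
      List.foldr (fun i q => pderiv i q) p l = C c := by
  suffices H : ∀ (n : ℕ) (p : P k), p ≠ 0 → p.totalDegree ≤ n →
      ∃ (c : k) (l : List (Fin 2)), c ≠ 0 ∧
        List.foldr (fun i q => pderiv i q) p l = C c from H _ p hp le_rfl
  intro n
  induction n with
  | zero =>
    intro p hp hd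
    exact const_case k p hp (Nat.le_zero.mp hd)
  | succ n ih =>
    intro p hp hd
    by_cases h0 : p.totalDegree = 0
    · exact const_case k p hp h0
    · -- find a variable occurring in p
      have hex : ∃ (m' : Fin 2 →₀ ℕ) (i : Fin 2), m' ∈ p.support ∧ m' i ≠ 0 := by
        by_contra hc
        push_neg at hc
        exact h0 ((totalDegree_eq_zero_iff (Fin 2) p).mpr fun m hm i => hc m i hm)
      obtain ⟨m', i, hm', hi⟩ := hex
      have hle : Finsupp.single i 1 ≤ m' := Finsupp.single_le_iff.mpr (Nat.pos_of_ne_zero hi)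
      have hq0 : pderiv i p ≠ 0 := by
        intro h
        have := coeff_pderiv k i p (m' - Finsupp.single i 1)
        rw [h, coeff_zero, tsub_add_cancel_of_le hle] at this
        have hcp : coeff m' p ≠ 0 := mem_support_iff.mp hm'
        exact hcp (by
          rcases mul_eq_zero.mp this.symm with h' | h'
          · exact absurd h' (Nat.cast_ne_zero.mpr (Nat.succ_ne_zero _))
          · exact h')
      have hdeg : (pderiv i p).totalDegree < p.totalDegree := by
        rw [totalDegree, Finset.sup_lt_iff (Nat.pos_of_ne_zero h0)]
        intro s hs
        have hcs : coeff (s + Finsupp.single i 1) p ≠ 0 := by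
          intro h
          have := coeff_pderiv k i p s
          rw [h, mul_zero] at this
          exact mem_support_iff.mp hs this
        have hle2 : ((s + Finsupp.single i 1).sum fun _ e => e) ≤ p.totalDegree :=
          le_totalDegree (mem_support_iff.mpr hcs)
        have hsum : ((s + Finsupp.single i 1).sum fun _ e => e)
            = (s.sum fun _ e => e) + 1 := by
          rw [Finsupp.sum_add_index' (fun _ => rfl) (fun _ _ _ => rfl),
            Finsupp.sum_single_index rfl]
        omega
      obtain ⟨c, l, hc, hl⟩ := ih (pderiv i p) hq0 (by omega)
      exact ⟨c, l ++ [i], hc, by rw [List.foldr_append]; exact hl⟩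

end WeylSimple

open WeylSimple MvPolynomial in
/-- The first Weyl algebra over a field of characteristic zero is a simple ring. -/
theorem weylAlgebra_isSimpleRing (k : Type) [Field k] [CharZero k] :
    IsSimpleRing (WeylAlgebra k) := by
  classical
  have hbt : (⊥ : TwoSidedIdeal (WeylAlgebra k)) ≠ ⊤ := by
    intro h
    have h1 : (1 : WeylAlgebra k) ∈ (⊥ : TwoSidedIdeal (WeylAlgebra k)) := by
      rw [h]; trivial
    rw [TwoSidedIdeal.mem_bot] at h1
    have h2 := congrArg (ε k) h1
    rw [ε_one, map_zero] at h2
    exact one_ne_zero h2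
  letI : Nontrivial (TwoSidedIdeal (WeylAlgebra k)) := ⟨⊥, ⊤, hbt⟩
  refine ⟨⟨fun I => ?_⟩⟩
  by_cases hI : I = ⊥
  · exact Or.inl hI
  refine Or.inr ?_
  have hex : ∃ a, a ∈ I ∧ a ≠ 0 := by
    by_contra hcon
    push_neg at hcon
    apply hI
    refine SetLike.ext fun a => ⟨fun h => (TwoSidedIdeal.mem_bot _).mpr (hcon a h), fun h => ?_⟩
    rw [TwoSidedIdeal.mem_bot] at h
    rw [h]
    exact I.zero_mem
  obtain ⟨a, haI, ha0⟩ := hex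
  have hεa : ε k a ≠ 0 := fun h => ha0 (ε_injective k (by rw [h, map_zero]))
  obtain ⟨c, l, hc0, hl⟩ := exists_list k (ε k a) hεa
  set f : Fin 2 → WeylAlgebra k → WeylAlgebra k :=
    fun i w => if i = 0 then wd k * w - w * wd k
      else w * wx k - wx k * w with hfdef
  have hf0 : ∀ w, f 0 w = wd k * w - w * wd k := fun w => by simp [hfdef]
  have hf1 : ∀ w, f 1 w = w * wx k - wx k * w := fun w => by
    simp [hfdef, show (1 : Fin 2) ≠ 0 by decide]
  have key : ∀ (t : List (Fin 2)) (w : WeylAlgebra k), w ∈ I →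
      List.foldr f w t ∈ I ∧
      ε k (List.foldr f w t)
        = List.foldr (fun i q => pderiv i q) (ε k w) t := by
    intro t
    induction t with
    | nil => exact fun w hw => ⟨hw, rfl⟩
    | cons i t ih =>
      intro w hw
      obtain ⟨h1, h2⟩ := ih w hw
      rw [List.foldr_cons, List.foldr_cons]
      by_cases hi : i = 0
      · subst hi
        refine ⟨?_, ?_⟩
        · rw [hf0]
          exact I.sub_mem (I.mul_mem_left _ _ h1) (I.mul_mem_right _ _ h1)
        · rw [hf0, ε_comm_d, h2]
      · have hi1 : i = 1 := by
          fin_cases i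
          · exact absurd rfl hi
          · rfl
        subst hi1
        refine ⟨?_, ?_⟩
        · rw [hf1]
          exact I.sub_mem (I.mul_mem_right _ _ h1) (I.mul_mem_left _ _ h1)
        · rw [hf1, ε_comm_x, h2]
  obtain ⟨hbI, hbε⟩ := key l a haI
  rw [hl] at hbε
  have hb : List.foldr f a l = algebraMap k (WeylAlgebra k) c := by
    apply ε_injective k
    rw [hbε, Algebra.algebraMap_eq_smul_one, map_smul, ε_one, smul_eq_C_mul, mul_one]
  have h1I : (1 : WeylAlgebra k) ∈ I := by
    have hm := I.mul_mem_left (algebraMap k (WeylAlgebra k) c⁻¹) _ (hb ▸ hbI)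
    rw [← map_mul, inv_mul_cancel₀ hc0, map_one] at hm
    exact hm
  exact I.eq_top h1I
end

section
/- Let Λ be a finitely generated free abelian group (a weight lattice) and W a finite group acting on Λ. For a prime p, call λ ∈ Λ p-regular if the stabilizer in W of the class of λ in Λ/pΛ is trivial. If the W-action on Λ ⊗ ℚ is faithful and p is larger than some bound depending on W and Λ, then there exists a p-regular element λ ∈ Λ. -/
/-- For a finite group `W` acting on a weight lattice `Λ ≅ ℤⁿ`, with the action
faithful on `Λ ⊗ ℚ`, for all sufficiently large primes `p` there exists a
`p`-regular weight, i.e. some `λ ∈ Λ` whose stabilizer in `W` modulo `p` is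
trivial. -/
theorem exists_p_regular_weight (n : ℕ) (W : Type) [Group W] [Finite W]
    [DistribMulAction W (Fin n → ℤ)] [DistribMulAction W (Fin n → ℚ)]
    (hcompat : ∀ (w : W) (lam : Fin n → ℤ),
      w • (fun i => (lam i : ℚ)) = fun i => ((w • lam) i : ℚ))
    (hfaithful : ∀ w : W, (∀ v : Fin n → ℚ, w • v = v) → w = 1) :
    ∃ N : ℕ, ∀ p : ℕ, p.Prime → N < p →
      ∃ lam : Fin n → ℤ,
        ∀ w : W, (∀ i, (p : ℤ) ∣ (w • lam - lam) i) → w = 1 := by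
  classical
  have : Fintype W := Fintype.ofFinite W
  -- Step 1: find an integer vector `lam` moved by every nontrivial `w`.
  have key : ∃ lam : Fin n → ℤ, ∀ w : W, w • lam = lam → w = 1 := by
    rcases Nat.eq_zero_or_pos n with hn | hn
    · subst hn
      exact ⟨fun i => 0, fun w _ => hfaithful w fun v => Subsingleton.elim _ _⟩
    · have hnt : Nontrivial (Fin n → ℚ) := by
        refine ⟨fun _ => 0, fun _ => 1, fun h => ?_⟩
        have := congrFun h ⟨0, hn⟩
        simp at this
      set q : W → Subspace ℚ (Fin n → ℚ) := fun w =>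
        if w = 1 then ⊥ else LinearMap.ker
          ((DistribMulAction.toAddMonoidHom (Fin n → ℚ) w).toRatLinearMap - LinearMap.id)
        with hq_def
      have hq : ∀ w, q w ≠ ⊤ := by
        intro w
        by_cases hw : w = 1
        · simp [hq_def, hw]
        · simp only [hq_def, hw, if_false]
          intro htop
          apply hw
          apply hfaithful
          intro v
          have hv : v ∈ LinearMap.ker
              ((DistribMulAction.toAddMonoidHom (Fin n → ℚ) w).toRatLinearMap
                - LinearMap.id) := by
            rw [htop]; trivial
          have := LinearMap.mem_ker.mp hv
          simpa [sub_eq_zero] using this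
      have hcov : ⋃ w, (q w : Set (Fin n → ℚ)) ≠ Set.univ := by
        intro h
        obtain ⟨w, hw⟩ := Subspace.exists_eq_top_of_iUnion_eq_univ h
        exact hq w hw
      obtain ⟨v, hv⟩ := Set.ne_univ_iff_exists_notMem _ |>.mp hcov
      have hv' : ∀ w : W, w ≠ 1 → w • v ≠ v := by
        intro w hw hwe
        apply hv
        refine Set.mem_iUnion.mpr ⟨w, ?_⟩
        simp only [hq_def, hw, if_false, SetLike.mem_coe, LinearMap.mem_ker,
          LinearMap.sub_apply, LinearMap.id_apply, AddMonoidHom.coe_toRatLinearMap]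
        simpa [sub_eq_zero] using hwe
      -- clear denominators
      obtain ⟨b, hb⟩ := IsLocalization.exist_integer_multiples_of_finite
        (nonZeroDivisors ℤ) (S := ℚ) v
      choose lam hlam using hb
      refine ⟨lam, ?_⟩
      intro w hw
      by_contra hne
      apply hv' w hne
      have h1 : (fun i => (lam i : ℚ)) = ((b : ℤ) : ℚ) • v := by
        funext i
        have := hlam i
        simpa [Algebra.smul_def, eq_comm] using this.symm
      have h2 : w • (fun i => (lam i : ℚ)) = fun i => (lam i : ℚ) := by
        rw [hcompat w lam, hw]
      rw [h1] at h2
      have h3 : ((b : ℤ) : ℚ) • (w • v) = ((b : ℤ) : ℚ) • v := by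
        rw [← h2]
        exact (map_rat_smul (DistribMulAction.toAddMonoidHom (Fin n → ℚ) w) _ _).symm
      have hb0 : ((b : ℤ) : ℚ) ≠ 0 := by
        exact_mod_cast nonZeroDivisors.coe_ne_zero b
      exact smul_right_injective _ hb0 h3
  obtain ⟨lam, hlam⟩ := key
  refine ⟨Finset.univ.sup (fun wi : W × Fin n => ((wi.1 • lam - lam) wi.2).natAbs), ?_⟩
  intro p hp hNp
  refine ⟨lam, ?_⟩
  intro w hdvd
  apply hlam w
  have hz : ∀ i, (w • lam - lam) i = 0 := by
    intro i
    by_contra h0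
    have h1 : (p : ℤ) ≤ |(w • lam - lam) i| :=
      Int.le_of_dvd (abs_pos.mpr h0) ((dvd_abs _ _).mpr (hdvd i))
    have h2 : ((w • lam - lam) i).natAbs ≤
        Finset.univ.sup (fun wi : W × Fin n => ((wi.1 • lam - lam) wi.2).natAbs) :=
      Finset.le_sup (f := fun wi : W × Fin n => ((wi.1 • lam - lam) wi.2).natAbs) (Finset.mem_univ (w, i))
    have h3 : |(w • lam - lam) i| < (p : ℤ) := by
      rw [Int.abs_eq_natAbs]
      exact_mod_cast lt_of_le_of_lt h2 hNp
    omega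
  have : w • lam - lam = 0 := funext hz
  exact sub_eq_zero.mp this
end
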